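/- Let N ≥ 1, let R be an N×N real matrix with R_{mn} ≥ 0 for all m ≠ n, let p^eq : Fin N → ℝ with p^eq_n > 0 satisfy detailed balance R_{nm}·p^eq_m = R_{mn}·p^eq_n, and let p : Fin N → ℝ with p_n > 0. Define (K_p v)_n := Σ_{m≠n} R_{nm} · p^eq_m · Φ(p_n/p^eq_n, p_m/p^eq_m) · (v_n − v_m). Then for every w ∈ ℝ^N with w_n ∈ {−1, +1} for all n, ⟨w, K_p w⟩ ≤ 2 · Σ_{(n,m) : n≠m, w_n ≠ w_m} R_{mn} · p_n, where the sum on the right is over ordered pairs (n,m) with n ≠ m and w_n ≠ w_m. -/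

import Mathlib

/-- The logarithmic mean of two positive real numbers. -/
noncomputable def logMean (x y : ℝ) : ℝ :=
  if x = y then x else (x - y) / (Real.log x - Real.log y)

/-- The Onsager-type matrix `K_p` acting on a vector `v`:
`(K_p v)_n = Σ_{m≠n} R_{nm} p^eq_m Φ(p_n/p^eq_n, p_m/p^eq_m) (v_n − v_m)`. -/
noncomputable def Kop {N : ℕ} (R : Matrix (Fin N) (Fin N) ℝ) (peq p v : Fin N → ℝ) :
    Fin N → ℝ :=
  fun n => ∑ m ∈ Finset.univ.filter (· ≠ n),
    R n m * peq m * logMean (p n / peq n) (p m / peq m) * (v n - v m)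

/-!
For `w` with entries `±1`, the summand of `⟨w, K_p w⟩` for the pair `(n, m)` vanishes when
`w n = w m` and equals `2 R_{nm} p^eq_m Φ(p_n/p^eq_n, p_m/p^eq_m)` otherwise. The logarithmic
mean is at most the arithmetic mean, and detailed balance turns `R_{nm} p^eq_m · p_n/p^eq_n`
into `R_{mn} p_n`, so that summand is at most `R_{mn} p_n + R_{nm} p_m`. Summing over the pairs
and exchanging `n` and `m` in the second term gives the bound.
-/

open Finset Real

theorem logMean_comm (x y : ℝ) : logMean x y = logMean y x := by
  unfold logMean
  rcases eq_or_ne x y with rfl | h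
  · rfl
  · rw [if_neg h, if_neg h.symm, ← neg_sub x, ← neg_sub (log x), neg_div_neg_eq]

theorem two_mul_div_add_two_le_log_one_add {a : ℝ} (ha : 0 ≤ a) :
    2 * a / (a + 2) ≤ log (1 + a) := by
  have h := le_hasSum (hasSum_log_one_add ha) 0 fun _ _ => by positivity
  simpa [mul_div_assoc] using h

theorem two_mul_sub_div_add_le_log_sub_log {x y : ℝ} (hy : 0 < y) (hyx : y ≤ x) :
    2 * (x - y) / (x + y) ≤ log x - log y := by
  have h := two_mul_div_add_two_le_log_one_add (div_nonneg (sub_nonneg.mpr hyx) hy.le)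
  have hlhs : 2 * ((x - y) / y) / ((x - y) / y + 2) = 2 * (x - y) / (x + y) := by
    field_simp
    ring
  have hrhs : 1 + (x - y) / y = x / y := by
    field_simp
    ring
  rwa [hlhs, hrhs, log_div (hy.trans_le hyx).ne' hy.ne'] at h

theorem logMean_le_add_div_two {x y : ℝ} (hx : 0 < x) (hy : 0 < y) :
    logMean x y ≤ (x + y) / 2 := by
  wlog hyx : y < x generalizing x y
  · rcases (not_lt.mp hyx).eq_or_lt with rfl | hxy
    · simp [logMean]
    · rw [logMean_comm, add_comm]
      exact this hy hx hxy
  have hlog := two_mul_sub_div_add_le_log_sub_log hy hyx.le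
  have hpos : 0 < 2 * (x - y) / (x + y) := by
    have := sub_pos.mpr hyx
    positivity
  rw [logMean, if_neg hyx.ne', div_le_iff₀ (hpos.trans_le hlog)]
  calc x - y = (x + y) / 2 * (2 * (x - y) / (x + y)) := by field_simp
    _ ≤ (x + y) / 2 * (log x - log y) := by gcongr

theorem two_mul_mul_logMean_le_of_detailed_balance {a b πa πb qa qb : ℝ} (ha : 0 ≤ a)
    (hπa : 0 < πa) (hπb : 0 < πb) (hqa : 0 < qa) (hqb : 0 < qb) (hdb : a * πb = b * πa) :
    2 * (a * πb * logMean (qa / πa) (qb / πb)) ≤ b * qa + a * qb := by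
  calc 2 * (a * πb * logMean (qa / πa) (qb / πb))
      ≤ 2 * (a * πb * ((qa / πa + qb / πb) / 2)) := by
        gcongr
        exact logMean_le_add_div_two (by positivity) (by positivity)
    _ = a * πb * (qa / πa) + a * qb := by field_simp
    _ = b * qa + a * qb := by rw [hdb]; field_simp

theorem mul_mul_sub_eq_ite_of_sign {a b : ℝ} (ha : a = 1 ∨ a = -1) (hb : b = 1 ∨ b = -1)
    (c : ℝ) : a * (c * (a - b)) = if a ≠ b then 2 * c else 0 := by
  rcases ha with rfl | rfl <;> rcases hb with rfl | rfl <;> norm_num <;> ring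

theorem Finset.sum_filter_swap_of_symmetric {ι M : Type*} [Fintype ι] [AddCommMonoid M]
    {P : ι → ι → Prop} [DecidableRel P] (hP : ∀ i j, P i j → P j i) (f : ι → ι → M) :
    ∑ x ∈ univ.filter (fun x : ι × ι => P x.1 x.2), f x.2 x.1 =
      ∑ x ∈ univ.filter (fun x : ι × ι => P x.1 x.2), f x.1 x.2 :=
  sum_equiv (Equiv.prodComm ι ι) (fun x => by simpa using ⟨hP _ _, hP _ _⟩)
    fun _ _ => rfl

theorem inner_Kop_le_two_mul_partial_activity_general (N : ℕ)
    (R : Matrix (Fin N) (Fin N) ℝ) (hR : ∀ m n : Fin N, m ≠ n → 0 ≤ R m n)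
    (peq : Fin N → ℝ) (hpeq : ∀ n, 0 < peq n)
    (hdb : ∀ n m : Fin N, R n m * peq m = R m n * peq n)
    (p : Fin N → ℝ) (hp : ∀ n, 0 < p n)
    (w : Fin N → ℝ) (hw : ∀ n, w n = 1 ∨ w n = -1) :
    ∑ n, w n * Kop R peq p w n
      ≤ 2 * ∑ nm ∈ Finset.univ.filter
          (fun nm : Fin N × Fin N => nm.1 ≠ nm.2 ∧ w nm.1 ≠ w nm.2),
          R nm.2 nm.1 * p nm.1 := by
  set S := univ.filter fun nm : Fin N × Fin N => nm.1 ≠ nm.2 ∧ w nm.1 ≠ w nm.2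
  have hS : ∀ n m : Fin N, n ≠ m ∧ w n ≠ w m → m ≠ n ∧ w m ≠ w n :=
    fun _ _ h => ⟨h.1.symm, h.2.symm⟩
  calc ∑ n, w n * Kop R peq p w n
      ≤ ∑ n, ∑ m ∈ univ.filter (· ≠ n),
          if w n ≠ w m then R m n * p n + R n m * p m else 0 := by
        refine sum_le_sum fun n _ => ?_
        rw [Kop, mul_sum]
        refine sum_le_sum fun m hm => ?_
        rw [mul_mul_sub_eq_ite_of_sign (hw n) (hw m)]
        split_ifs
        · exact two_mul_mul_logMean_le_of_detailed_balance (hR n m (mem_filter.mp hm).2.symm)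
            (hpeq n) (hpeq m) (hp n) (hp m) (hdb n m)
        · rfl
    _ = ∑ nm ∈ S, (R nm.2 nm.1 * p nm.1 + R nm.1 nm.2 * p nm.2) := by
        simp only [S, sum_filter, Fintype.sum_prod_type, ite_and, ne_comm]
    _ = 2 * ∑ nm ∈ S, R nm.2 nm.1 * p nm.1 := by
        rw [sum_add_distrib, sum_filter_swap_of_symmetric hS fun n m => R m n * p n]
        ring

/-- For every `w` with entries `±1`, `⟨w, K_p w⟩ ≤ 2 Σ_{n≠m, w_n≠w_m} R_{mn} p_n`
(the partial dynamical activity bound). -/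
theorem inner_Kop_le_two_mul_partial_activity (N : ℕ) (hN : 1 ≤ N)
    (R : Matrix (Fin N) (Fin N) ℝ) (hR : ∀ m n : Fin N, m ≠ n → 0 ≤ R m n)
    (peq : Fin N → ℝ) (hpeq : ∀ n, 0 < peq n)
    (hdb : ∀ n m : Fin N, R n m * peq m = R m n * peq n)
    (p : Fin N → ℝ) (hp : ∀ n, 0 < p n)
    (w : Fin N → ℝ) (hw : ∀ n, w n = 1 ∨ w n = -1) :
    ∑ n, w n * Kop R peq p w n
      ≤ 2 * ∑ nm ∈ Finset.univ.filter
          (fun nm : Fin N × Fin N => nm.1 ≠ nm.2 ∧ w nm.1 ≠ w nm.2),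
          R nm.2 nm.1 * p nm.1 :=
  inner_Kop_le_two_mul_partial_activity_general N R hR peq hpeq hdb p hp w hw
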